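/- Let f : ℝ^d → ℝ be nonnegative and integrable with ∫ f = 1, let Λⁿ be packing sets for f at level 1 with a common separation constant, converging weakly to Λ, and let K ⊆ ℝ^d be compact. If ∫_K ∑_{λ∈Λⁿ} f(x−λ) dx → |K| as n → ∞, then ∫_K ∑_{λ∈Λ} f(x−λ) dx = |K| and ∑_{λ∈Λ} f(x−λ) = 1 for almost every x ∈ K. -/

import Mathlib

open MeasureTheory Filter Pointwise

noncomputable section

/-- The closed cube `[-R/2, R/2]^d`. -/
def cube (d : ℕ) (R : ℝ) : Set (Fin d → ℝ) := {y | ∀ i, |y i| ≤ R / 2}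

/-- The open cube `(-ε/2, ε/2)^d`. -/
def ocube (d : ℕ) (ε : ℝ) : Set (Fin d → ℝ) := {y | ∀ i, |y i| < ε / 2}

/-- `f + Λ` is a packing at level 1: `∑_{λ ∈ Λ} f(x - λ) ≤ 1` a.e. -/
def IsPacking {d : ℕ} (f : (Fin d → ℝ) → ℝ) (Λ : Set (Fin d → ℝ)) : Prop :=
  ∀ᵐ x : Fin d → ℝ, (∑' l : Λ, f (x - (l : Fin d → ℝ))) ≤ 1

/-- `Λ` is uniformly discrete with separation constant `δ`: distinct points are at
distance greater than `δ`. -/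
def Separated {d : ℕ} (δ : ℝ) (Λ : Set (Fin d → ℝ)) : Prop :=
  ∀ a ∈ Λ, ∀ b ∈ Λ, a ≠ b → δ < dist a b

/-- Weak convergence of the sets `Λⁿ` to `Λ`: for every `ε, R > 0`, eventually
`Λⁿ ∩ Q_R ⊆ Λ + Q_ε` and `Λ ∩ Q_R ⊆ Λⁿ + Q_ε`. -/
def WeakConv {d : ℕ} (Λn : ℕ → Set (Fin d → ℝ)) (Λ : Set (Fin d → ℝ)) : Prop :=
  ∀ ε > (0 : ℝ), ∀ R > (0 : ℝ), ∃ N : ℕ, ∀ n ≥ N,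
    Λn n ∩ cube d R ⊆ Λ + ocube d ε ∧ Λ ∩ cube d R ⊆ Λn n + ocube d ε

/-- The upper density of `Λ` is at least `c`: for every `ε > 0` there are arbitrarily
large `R` and a cube of side `R` containing at least `(c - ε) R^d` points of `Λ`. -/
def UpperDensGE {d : ℕ} (Λ : Set (Fin d → ℝ)) (c : ℝ) : Prop :=
  ∀ ε > (0 : ℝ), ∀ R₀ : ℝ, ∃ R > R₀, ∃ x : Fin d → ℝ,
    (((Λ ∩ {y | ∀ i, |y i - x i| ≤ R / 2}).ncard : ℝ)) ≥ (c - ε) * R ^ d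

/-! Work with the `ℝ≥0∞`-valued periodization `P_S(x) = ∑_{λ ∈ S} f(x - λ)`, where sums and
integrals commute freely. If `Λⁿ` is within `r` of `Λ` on a large ball, matching each point of
`Λⁿ` with a nearby point of `Λ` (injectively, since `2r` is below the separation) gives
`∫_K P_{Λⁿ ∩ B} ≤ ∫_{K_r} P_Λ`, with `K_r` the closed `r`-thickening of `K`; the points of `Λⁿ`
outside the ball contribute uniformly little, because a separated set meets every translate of
`-K` in a bounded number of points and `f` is integrable. Letting `n → ∞` and then `r → 0`
gives `|K| ≤ ∫_K P_Λ`. The same matching in the other direction shows `∫_A P_Λ ≤ |A|` for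
compact `A`, so `P_Λ ≤ 1` a.e. by Lebesgue differentiation, and together these force
`P_Λ = 1` a.e. on `K`. -/

open Metric ENNReal Topology

section LIntegral

variable {α : Type*} [MeasurableSpace α] {μ : Measure α} {h : α → ℝ≥0∞}

theorem setLIntegral_le_measure_of_ae_le_one (hh : ∀ᵐ x ∂μ, h x ≤ 1) (A : Set α) :
    ∫⁻ x in A, h x ∂μ ≤ μ A :=
  (lintegral_mono_ae (ae_restrict_of_ae hh)).trans_eq (setLIntegral_one A)

theorem setLIntegral_le_setLIntegral_add_measure_diff (hh : ∀ᵐ x ∂μ, h x ≤ 1) {A A' : Set α}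
    (hA : MeasurableSet A) (hAA' : A ⊆ A') :
    ∫⁻ x in A', h x ∂μ ≤ ∫⁻ x in A, h x ∂μ + μ (A' \ A) := by
  rw [← lintegral_inter_add_sdiff h A' hA, Set.inter_eq_right.2 hAA']
  gcongr
  exact setLIntegral_le_measure_of_ae_le_one hh _

theorem tendsto_setLIntegral_compl_closedBall [PseudoMetricSpace α] [OpensMeasurableSpace α]
    (hgi : ∫⁻ x, h x ∂μ ≠ ∞) (c : α) :
    Tendsto (fun m : ℕ => ∫⁻ y in (closedBall c m)ᶜ, h y ∂μ) atTop (𝓝 0) := by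
  have hm (m : ℕ) : MeasurableSet (closedBall c m)ᶜ := measurableSet_closedBall.compl
  have hlim := tendsto_measure_iInter_atTop (μ := μ.withDensity h)
    (fun m : ℕ => (hm m).nullMeasurableSet)
    (fun a b hab => Set.compl_subset_compl.2 (closedBall_subset_closedBall (Nat.cast_le.2 hab)))
    ⟨0, by
      rw [withDensity_apply _ (hm 0)]
      exact ((setLIntegral_le_lintegral _ _).trans_lt hgi.lt_top).ne⟩
  simp only [← Set.compl_iUnion, iUnion_closedBall_nat, Set.compl_univ, measure_empty] at hlim
  exact hlim.congr fun m => withDensity_apply _ (hm m)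

theorem ae_le_one_of_forall_setLIntegral_closedBall_le [MetricSpace α] [BorelSpace α]
    [SecondCountableTopology α] [HasBesicovitchCovering α] [IsLocallyFiniteMeasure μ]
    (hh : AEMeasurable h μ)
    (hball : ∀ x, ∀ r > 0, ∫⁻ y in closedBall x r, h y ∂μ ≤ μ (closedBall x r)) :
    ∀ᵐ x ∂μ, h x ≤ 1 := by
  set ρ := μ.withDensity h
  have hρ (x : α) (r : ℝ) (hr : 0 < r) : ρ (closedBall x r) ≤ μ (closedBall x r) := by
    rw [withDensity_apply _ measurableSet_closedBall]
    exact hball x r hr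
  have : IsLocallyFiniteMeasure ρ := ⟨fun x => by
    obtain ⟨U, hU, hUfin⟩ := μ.finiteAt_nhds x
    obtain ⟨ε, hε, hεU⟩ := nhds_basis_closedBall.mem_iff.1 hU
    exact ⟨closedBall x ε, closedBall_mem_nhds x hε,
      (hρ x ε hε).trans_lt ((measure_mono hεU).trans_lt hUfin)⟩⟩
  filter_upwards [Besicovitch.ae_tendsto_rnDeriv ρ μ, Measure.rnDeriv_withDensity₀ μ hh]
    with x hx hxh
  rw [← hxh]
  refine le_of_tendsto hx (eventually_nhdsWithin_of_forall fun r hr => ?_)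
  exact ENNReal.div_le_of_le_mul (by rw [one_mul]; exact hρ x r hr)

end LIntegral

section Translation

variable {E : Type*} [NormedAddCommGroup E] [MeasurableSpace E] [BorelSpace E]
  {μ : Measure E} [μ.IsAddRightInvariant] {g : E → ℝ≥0∞}

theorem AEMeasurable.comp_sub_right (hg : AEMeasurable g μ) (v : E) :
    AEMeasurable (fun x => g (x - v)) μ :=
  hg.comp_quasiMeasurePreserving (measurePreserving_sub_right μ v).quasiMeasurePreserving

theorem setLIntegral_comp_sub_le_cthickening (g : E → ℝ≥0∞) (A : Set E) {s t : E} {r : ℝ}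
    (h : dist s t ≤ r) :
    ∫⁻ x in A, g (x - s) ∂μ ≤ ∫⁻ x in cthickening r A, g (x - t) ∂μ := by
  have hA : A ⊆ (· + (t - s)) ⁻¹' cthickening r A := fun x hx =>
    mem_cthickening_of_dist_le _ x r A hx
      (by rwa [dist_eq_norm, add_sub_cancel_left, ← dist_eq_norm, dist_comm])
  calc ∫⁻ x in A, g (x - s) ∂μ = ∫⁻ x in A, g (x + (t - s) - t) ∂μ := by
        congr 1 with x
        abel_nf
    _ ≤ ∫⁻ x in (· + (t - s)) ⁻¹' cthickening r A, g (x + (t - s) - t) ∂μ :=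
        lintegral_mono_set hA
    _ = ∫⁻ x in cthickening r A, g (x - t) ∂μ :=
        (measurePreserving_add_right μ (t - s)).setLIntegral_comp_preimage_emb
          (measurableEmbedding_addRight _) (fun y => g (y - t)) _

end Translation

section

variable {d : ℕ}

theorem cube_eq_closedBall {R : ℝ} (hR : 0 ≤ R) : cube d R = closedBall 0 (R / 2) := by
  ext y
  simp [cube, pi_norm_le_iff_of_nonneg (by linarith : 0 ≤ R / 2), Real.norm_eq_abs]

theorem ocube_eq_ball {ε : ℝ} (hε : 0 < ε) : ocube d ε = ball 0 (ε / 2) := by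
  ext y
  simp [ocube, pi_norm_lt_iff (by linarith : 0 < ε / 2), Real.norm_eq_abs]

theorem WeakConv.eventually_subset_thickening {Λn : ℕ → Set (Fin d → ℝ)}
    {Λ : Set (Fin d → ℝ)} (h : WeakConv Λn Λ) {r : ℝ} (hr : 0 < r) (R : ℝ) :
    ∀ᶠ n in atTop, Λn n ∩ closedBall 0 R ⊆ thickening r Λ ∧
      Λ ∩ closedBall 0 R ⊆ thickening r (Λn n) := by
  obtain ⟨N, hN⟩ := h (2 * r) (by positivity) (2 * max R 1) (by positivity)
  have hball : closedBall (0 : Fin d → ℝ) R ⊆ cube d (2 * max R 1) := by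
    rw [cube_eq_closedBall (by positivity)]
    exact closedBall_subset_closedBall (by linarith [le_max_left R 1])
  filter_upwards [eventually_ge_atTop N] with n hn
  rw [← add_ball_zero, ← add_ball_zero, ← mul_div_cancel_left₀ r two_ne_zero,
    ← ocube_eq_ball (by positivity)]
  exact ⟨(Set.inter_subset_inter_right _ hball).trans (hN n hn).1,
    (Set.inter_subset_inter_right _ hball).trans (hN n hn).2⟩

section Separated

variable {δ : ℝ} {S : Set (Fin d → ℝ)}

theorem Separated.mono {T : Set (Fin d → ℝ)} (hS : Separated δ S) (hTS : T ⊆ S) :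
    Separated δ T :=
  fun a ha b hb => hS a (hTS ha) b (hTS hb)

theorem Separated.countable (hδ : 0 < δ) (hS : Separated δ S) : S.Countable := by
  refine Set.PairwiseDisjoint.countable_of_isOpen (s := fun l => ball l (δ / 2)) ?_
    (fun _ _ => isOpen_ball) (fun l _ => nonempty_ball.2 (by positivity))
  intro a ha b hb hab
  exact ball_disjoint_ball (by linarith [hS a ha b hb hab])

theorem Separated.card_le (hδ : 0 < δ) (hS : Separated δ S) {c : Fin d → ℝ} {r : ℝ}
    (hr : 0 ≤ r) {t : Finset (Fin d → ℝ)} (ht : ↑t ⊆ S ∩ closedBall c r) :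
    (t.card : ℝ) ≤ ((2 * r + δ) / δ) ^ d := by
  have hdisj : (t : Set (Fin d → ℝ)).PairwiseDisjoint (fun l => ball l (δ / 2)) :=
    fun x hx y hy hxy => ball_disjoint_ball (by linarith [hS x (ht hx).1 y (ht hy).1 hxy])
  have hsub : (⋃ l ∈ t, ball l (δ / 2)) ⊆ ball c (r + δ / 2) := by
    simp only [Set.iUnion_subset_iff]
    intro l hl y hy
    exact ball_subset_ball' (by linarith [mem_closedBall.1 (ht hl).2]) hy
  have key : (t.card : ℝ≥0∞) * ENNReal.ofReal (δ ^ d) ≤ ENNReal.ofReal ((2 * r + δ) ^ d) := by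
    calc (t.card : ℝ≥0∞) * ENNReal.ofReal (δ ^ d) = ∑ l ∈ t, volume (ball l (δ / 2)) := by
          simp [Real.volume_pi_ball _ (half_pos hδ), mul_div_cancel₀ δ two_ne_zero]
      _ = volume (⋃ l ∈ t, ball l (δ / 2)) :=
          (measure_biUnion_finset hdisj fun _ _ => measurableSet_ball).symm
      _ ≤ volume (ball c (r + δ / 2)) := measure_mono hsub
      _ = ENNReal.ofReal ((2 * r + δ) ^ d) := by
          rw [Real.volume_pi_ball _ (by positivity), Fintype.card_fin]; ring_nf
  rw [← ENNReal.ofReal_natCast, ← ENNReal.ofReal_mul (by positivity),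
    ENNReal.ofReal_le_ofReal_iff (by positivity)] at key
  rw [div_pow, le_div_iff₀ (by positivity)]
  exact key

theorem Separated.tsum_indicator_le (hδ : 0 < δ) (hS : Separated δ S) {A : Set (Fin d → ℝ)}
    {c : Fin d → ℝ} {r : ℝ} (hr : 0 ≤ r) (hA : A ⊆ closedBall c r) (y : Fin d → ℝ) :
    ∑' l : S, A.indicator 1 (y + l) ≤ ENNReal.ofReal (((2 * r + δ) / δ) ^ d) := by
  classical
  rw [ENNReal.tsum_eq_iSup_sum]
  refine iSup_le fun s => ?_
  set t := (s.filter fun l : S => y + l ∈ A).map (Function.Embedding.subtype _)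
  have ht : ↑t ⊆ S ∩ closedBall (c - y) r := by
    intro z hz
    simp only [t, Finset.coe_map, Function.Embedding.coe_subtype, Finset.coe_filter,
      Set.mem_image, Set.mem_ofPred_eq] at hz
    obtain ⟨l, ⟨-, hlA⟩, rfl⟩ := hz
    refine ⟨l.2, ?_⟩
    rw [mem_closedBall, dist_eq_norm, sub_sub_eq_add_sub, add_comm, ← dist_eq_norm]
    exact hA hlA
  calc ∑ l ∈ s, A.indicator 1 (y + l) = (t.card : ℝ≥0∞) := by
        simp [t, Set.indicator_apply, Finset.sum_boole]
    _ = ENNReal.ofReal t.card := (ofReal_natCast _).symm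
    _ ≤ _ := ofReal_le_ofReal (hS.card_le hδ hr ht)

end Separated

def periodization (g : (Fin d → ℝ) → ℝ≥0∞) (S : Set (Fin d → ℝ)) (x : Fin d → ℝ) : ℝ≥0∞ :=
  ∑' l : S, g (x - l)

section Periodization

variable {g : (Fin d → ℝ) → ℝ≥0∞} {S : Set (Fin d → ℝ)} {δ : ℝ}

theorem AEMeasurable.periodization (hg : AEMeasurable g) (hS : S.Countable) :
    AEMeasurable (periodization g S) :=
  have := hS.to_subtype
  AEMeasurable.tsum fun l => hg.comp_sub_right l

theorem setLIntegral_periodization (hg : AEMeasurable g) (hS : S.Countable)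
    (A : Set (Fin d → ℝ)) :
    ∫⁻ x in A, periodization g S x = ∑' l : S, ∫⁻ x in A, g (x - l) :=
  have := hS.to_subtype
  lintegral_tsum fun l => (hg.comp_sub_right l).restrict

theorem periodization_inter_add_diff (g : (Fin d → ℝ) → ℝ≥0∞) (S C : Set (Fin d → ℝ))
    (x : Fin d → ℝ) :
    periodization g (S ∩ C) x + periodization g (S \ C) x = periodization g S x := by
  have h := ENNReal.summable.tsum_union_disjoint (f := fun l => g (x - l))
    (s := S ∩ C) (t := S \ C) Set.disjoint_sdiff_inter.symm ENNReal.summable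
  rw [Set.inter_union_sdiff] at h
  exact h.symm

theorem Separated.tsum_setLIntegral_le (hδ : 0 < δ) (hS : Separated δ S)
    (hg : AEMeasurable g) {A B : Set (Fin d → ℝ)} {c : Fin d → ℝ} {r : ℝ} (hr : 0 ≤ r)
    (hAm : MeasurableSet A) (hA : A ⊆ closedBall c r) (hB : MeasurableSet B)
    (hAB : ∀ l ∈ S, ∀ y, y + l ∈ A → y ∈ B) :
    ∑' l : S, ∫⁻ x in A, g (x - l) ≤
      ENNReal.ofReal (((2 * r + δ) / δ) ^ d) * ∫⁻ y in B, g y := by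
  have := (hS.countable hδ).to_subtype
  have hshift (l : S) : ∫⁻ x in A, g (x - l) = ∫⁻ y, A.indicator 1 (y + l) * g y := by
    rw [← lintegral_indicator hAm, ← lintegral_add_right_eq_self _ (l : Fin d → ℝ)]
    congr 1 with y
    by_cases hy : y + l ∈ A <;> simp [hy]
  have hpt (y : Fin d → ℝ) : ∑' l : S, A.indicator 1 (y + l) * g y ≤
      ENNReal.ofReal (((2 * r + δ) / δ) ^ d) * B.indicator g y := by
    rw [ENNReal.tsum_mul_right]
    by_cases hy : y ∈ B
    · rw [Set.indicator_of_mem hy]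
      gcongr
      exact hS.tsum_indicator_le hδ hr hA y
    · rw [ENNReal.tsum_eq_zero.2 fun l => Set.indicator_of_notMem
        (fun h => hy (hAB _ l.2 _ h)) _, zero_mul]
      exact zero_le
  calc ∑' l : S, ∫⁻ x in A, g (x - l) = ∑' l : S, ∫⁻ y, A.indicator 1 (y + l) * g y :=
        tsum_congr hshift
    _ = ∫⁻ y, ∑' l : S, A.indicator 1 (y + l) * g y :=
        (lintegral_tsum fun l => ((measurable_one.indicator hAm).comp
          (measurable_add_const _)).aemeasurable.mul hg).symm
    _ ≤ ∫⁻ y, ENNReal.ofReal (((2 * r + δ) / δ) ^ d) * B.indicator g y := lintegral_mono hpt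
    _ = _ := by rw [lintegral_const_mul' _ _ ofReal_ne_top, lintegral_indicator hB]

theorem Separated.ae_periodization_lt_top (hδ : 0 < δ) (hS : Separated δ S)
    (hg : AEMeasurable g) (hgi : ∫⁻ x, g x ≠ ∞) : ∀ᵐ x, periodization g S x < ∞ := by
  have h := (ae_restrict_iUnion_iff (μ := volume) (fun m : ℕ => closedBall (0 : Fin d → ℝ) m)
    fun x => periodization g S x < ∞).2 fun m => ?_
  · rwa [iUnion_closedBall_nat, Measure.restrict_univ] at h
  refine ae_lt_top' ((hg.periodization (hS.countable hδ)).restrict) (ne_of_lt ?_)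
  calc ∫⁻ x in closedBall 0 m, periodization g S x
      ≤ ENNReal.ofReal (((2 * m + δ) / δ) ^ d) * ∫⁻ y in Set.univ, g y := by
        rw [setLIntegral_periodization hg (hS.countable hδ)]
        exact hS.tsum_setLIntegral_le hδ hg m.cast_nonneg measurableSet_closedBall
          subset_rfl MeasurableSet.univ fun _ _ _ _ => Set.mem_univ _
    _ < ∞ := by rw [Measure.restrict_univ]; exact mul_lt_top ofReal_lt_top hgi.lt_top

theorem Separated.setLIntegral_periodization_le_of_subset_thickening {r : ℝ}
    {T : Set (Fin d → ℝ)} (hS : Separated δ S) (hT : T.Countable) (hrδ : 2 * r ≤ δ)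
    (hST : S ⊆ thickening r T) (hg : AEMeasurable g) (A : Set (Fin d → ℝ)) :
    ∫⁻ x in A, periodization g S x ≤ ∫⁻ x in cthickening r A, periodization g T x := by
  have hnear (s : S) : ∃ t : T, dist (s : Fin d → ℝ) t < r := by
    obtain ⟨t, ht, hst⟩ := mem_thickening_iff.1 (hST s.2)
    exact ⟨⟨t, ht⟩, hst⟩
  choose φ hφ using hnear
  have hφinj : Function.Injective φ := by
    intro s₁ s₂ h
    by_contra hne
    have hfar := hS _ s₁.2 _ s₂.2 (Subtype.coe_ne_coe.2 hne)
    have hclose : dist (s₁ : Fin d → ℝ) s₂ < 2 * r := by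
      calc dist (s₁ : Fin d → ℝ) s₂
          ≤ dist (s₁ : Fin d → ℝ) (φ s₁) + dist (s₂ : Fin d → ℝ) (φ s₂) := by
            rw [h, dist_comm (s₂ : Fin d → ℝ)]; exact dist_triangle _ _ _
        _ < r + r := add_lt_add (hφ s₁) (hφ s₂)
        _ = 2 * r := by ring
    linarith
  have := hT.to_subtype
  have hSc : S.Countable := Set.countable_coe_iff.1 hφinj.countable
  calc ∫⁻ x in A, periodization g S x = ∑' s : S, ∫⁻ x in A, g (x - s) :=
        setLIntegral_periodization hg hSc A
    _ ≤ ∑' s : S, ∫⁻ x in cthickening r A, g (x - φ s) :=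
        ENNReal.tsum_le_tsum fun s => setLIntegral_comp_sub_le_cthickening g A (hφ s).le
    _ ≤ ∑' t : T, ∫⁻ x in cthickening r A, g (x - t) :=
        ENNReal.tsum_comp_le_tsum_of_injective hφinj
          fun t : T => ∫⁻ x in cthickening r A, g (x - t)
    _ = ∫⁻ x in cthickening r A, periodization g T x := (setLIntegral_periodization hg hT _).symm

theorem exists_setLIntegral_periodization_diff_closedBall_le (hδ : 0 < δ)
    (hg : AEMeasurable g) (hgi : ∫⁻ x, g x ≠ ∞) {K : Set (Fin d → ℝ)} (hKm : MeasurableSet K)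
    (hK : Bornology.IsBounded K) {η : ℝ≥0∞} (hη : 0 < η) :
    ∃ R, ∀ S, Separated δ S → ∫⁻ x in K, periodization g (S \ closedBall 0 R) x ≤ η := by
  obtain ⟨ρ, hρ0, hKρ⟩ := hK.subset_closedBall_lt 0 0
  have hsmall := ENNReal.Tendsto.const_mul (tendsto_setLIntegral_compl_closedBall hgi 0)
    (Or.inr (ofReal_ne_top (r := ((2 * ρ + δ) / δ) ^ d)))
  rw [mul_zero] at hsmall
  obtain ⟨m, hm⟩ := (hsmall.eventually_lt_const hη).exists
  refine ⟨m + ρ, fun S hS => ?_⟩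
  have hS' := hS.mono (Set.sdiff_subset (t := closedBall 0 (m + ρ)))
  rw [setLIntegral_periodization hg (hS'.countable hδ)]
  refine (hS'.tsum_setLIntegral_le hδ hg hρ0.le hKm hKρ measurableSet_closedBall.compl
    ?_).trans hm.le
  rintro l ⟨-, hl⟩ y hy
  simp only [Set.mem_compl_iff, mem_closedBall, dist_zero_right, not_le] at hl ⊢
  have hyl := mem_closedBall_zero_iff.1 (hKρ hy)
  have := norm_sub_le (y + l) y
  rw [add_sub_cancel_left] at this
  linarith

end Periodization

section WeakLimit

variable {Λn : ℕ → Set (Fin d → ℝ)} {Λ : Set (Fin d → ℝ)} {δ : ℝ} {g : (Fin d → ℝ) → ℝ≥0∞}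

theorem WeakConv.setLIntegral_periodization_inter_closedBall_le (hconv : WeakConv Λn Λ)
    (hδ : 0 < δ) (hsepn : ∀ n, Separated δ (Λn n)) (hsep : Separated δ Λ)
    (hg : AEMeasurable g) (hpack : ∀ n, ∀ᵐ x, periodization g (Λn n) x ≤ 1)
    {A : Set (Fin d → ℝ)} (hA : IsCompact A) (R : ℝ) :
    ∫⁻ x in A, periodization g (Λ ∩ closedBall 0 R) x ≤ volume A := by
  have hle (r : ℝ) (hr : 0 < r) (hrδ : 2 * r ≤ δ) :
      ∫⁻ x in A, periodization g (Λ ∩ closedBall 0 R) x ≤ volume (cthickening r A) := by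
    obtain ⟨n, -, hn⟩ := (hconv.eventually_subset_thickening hr R).exists
    calc ∫⁻ x in A, periodization g (Λ ∩ closedBall 0 R) x
        ≤ ∫⁻ x in cthickening r A, periodization g (Λn n) x :=
          (hsep.mono Set.inter_subset_left).setLIntegral_periodization_le_of_subset_thickening
            ((hsepn n).countable hδ) hrδ hn hg A
      _ ≤ volume (cthickening r A) := setLIntegral_le_measure_of_ae_le_one (hpack n) _
  refine ge_of_tendsto ((tendsto_measure_cthickening_of_isCompact hA).mono_left
    (nhdsWithin_le_nhds (s := Set.Ioi 0))) ?_
  filter_upwards [Ioo_mem_nhdsGT (half_pos hδ)] with r hr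
  exact hle r hr.1 (by linarith [hr.2])

theorem WeakConv.setLIntegral_periodization_le (hconv : WeakConv Λn Λ)
    (hδ : 0 < δ) (hsepn : ∀ n, Separated δ (Λn n)) (hsep : Separated δ Λ)
    (hg : AEMeasurable g) (hpack : ∀ n, ∀ᵐ x, periodization g (Λn n) x ≤ 1)
    {A : Set (Fin d → ℝ)} (hA : IsCompact A) :
    ∫⁻ x in A, periodization g Λ x ≤ volume A := by
  rw [setLIntegral_periodization hg (hsep.countable hδ), ENNReal.tsum_eq_iSup_sum]
  refine iSup_le fun s => ?_
  obtain ⟨R, hR⟩ := (s.image Subtype.val).finite_toSet.isBounded.subset_closedBall 0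
  let ι : s → ↥(Λ ∩ closedBall 0 R) := fun l =>
    ⟨l.1, l.1.2, hR (Finset.mem_coe.2 (Finset.mem_image_of_mem _ l.2))⟩
  have hι : Function.Injective ι := fun l₁ l₂ h => Subtype.ext (Subtype.ext
    (congrArg (fun l : ↥(Λ ∩ closedBall 0 R) => (l : Fin d → ℝ)) h))
  calc ∑ l ∈ s, ∫⁻ x in A, g (x - l) = ∑' l : s, ∫⁻ x in A, g (x - l.1) :=
        (Finset.tsum_subtype s fun l : Λ => ∫⁻ x in A, g (x - l)).symm
    _ ≤ ∑' l : ↥(Λ ∩ closedBall 0 R), ∫⁻ x in A, g (x - l) :=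
        ENNReal.tsum_comp_le_tsum_of_injective hι
          fun l : ↥(Λ ∩ closedBall 0 R) => ∫⁻ x in A, g (x - l)
    _ = ∫⁻ x in A, periodization g (Λ ∩ closedBall 0 R) x :=
        (setLIntegral_periodization hg ((hsep.countable hδ).mono Set.inter_subset_left) A).symm
    _ ≤ volume A :=
        hconv.setLIntegral_periodization_inter_closedBall_le hδ hsepn hsep hg hpack hA R

theorem WeakConv.ae_periodization_le_one (hconv : WeakConv Λn Λ)
    (hδ : 0 < δ) (hsepn : ∀ n, Separated δ (Λn n)) (hsep : Separated δ Λ)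
    (hg : AEMeasurable g) (hpack : ∀ n, ∀ᵐ x, periodization g (Λn n) x ≤ 1) :
    ∀ᵐ x, periodization g Λ x ≤ 1 :=
  ae_le_one_of_forall_setLIntegral_closedBall_le (hg.periodization (hsep.countable hδ))
    fun x r _ => hconv.setLIntegral_periodization_le hδ hsepn hsep hg hpack
      (isCompact_closedBall x r)

theorem WeakConv.volume_le_setLIntegral_periodization (hconv : WeakConv Λn Λ)
    (hδ : 0 < δ) (hsepn : ∀ n, Separated δ (Λn n)) (hΛ : Λ.Countable)
    (hg : AEMeasurable g) (hgi : ∫⁻ x, g x ≠ ∞) (hpack : ∀ᵐ x, periodization g Λ x ≤ 1)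
    {K : Set (Fin d → ℝ)} (hK : IsCompact K)
    (hlim : Tendsto (fun n => ∫⁻ x in K, periodization g (Λn n) x) atTop (𝓝 (volume K))) :
    volume K ≤ ∫⁻ x in K, periodization g Λ x := by
  refine ENNReal.le_of_forall_pos_le_add fun η hη _ => ?_
  have hη2 : (0 : ℝ≥0∞) < η / 2 := ENNReal.half_pos (by exact_mod_cast hη.ne')
  obtain ⟨R, hR⟩ := exists_setLIntegral_periodization_diff_closedBall_le hδ hg hgi
    hK.measurableSet hK.isBounded hη2
  obtain ⟨r, ⟨hr0, hrδ⟩, hr⟩ : ∃ r, r ∈ Set.Ioo 0 (δ / 2) ∧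
      volume (cthickening r K) < volume K + η / 2 :=
    (Filter.Eventually.and (Ioo_mem_nhdsGT (half_pos hδ))
      (((tendsto_measure_cthickening_of_isCompact hK).mono_left
        nhdsWithin_le_nhds).eventually_lt_const
        (ENNReal.lt_add_right hK.measure_ne_top hη2.ne'))).exists
  have hthick : ∫⁻ x in cthickening r K, periodization g Λ x ≤
      (∫⁻ x in K, periodization g Λ x) + η / 2 := by
    refine (setLIntegral_le_setLIntegral_add_measure_diff hpack hK.measurableSet
      (self_subset_cthickening K)).trans ?_
    gcongr
    exact (measure_sdiff_le_iff_le_add hK.measurableSet.nullMeasurableSet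
      (self_subset_cthickening K) hK.measure_ne_top).2 hr.le
  refine le_of_tendsto hlim ?_
  filter_upwards [hconv.eventually_subset_thickening hr0 R] with n hn
  calc ∫⁻ x in K, periodization g (Λn n) x
      = (∫⁻ x in K, periodization g (Λn n ∩ closedBall 0 R) x) +
          ∫⁻ x in K, periodization g (Λn n \ closedBall 0 R) x := by
        simp_rw [← periodization_inter_add_diff g (Λn n) (closedBall 0 R)]
        exact lintegral_add_left' ((hg.periodization
          (((hsepn n).countable hδ).mono Set.inter_subset_left)).restrict) _
    _ ≤ (∫⁻ x in cthickening r K, periodization g Λ x) + η / 2 :=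
        add_le_add (((hsepn n).mono Set.inter_subset_left
          ).setLIntegral_periodization_le_of_subset_thickening hΛ (by linarith) hn.1 hg K)
          (hR _ (hsepn n))
    _ ≤ (∫⁻ x in K, periodization g Λ x) + η / 2 + η / 2 := by gcongr
    _ = (∫⁻ x in K, periodization g Λ x) + η := by rw [add_assoc, ENNReal.add_halves]

end WeakLimit

section RealValued

variable {f : (Fin d → ℝ) → ℝ} {S : Set (Fin d → ℝ)} {δ : ℝ}

/-- This also holds where the real series diverges: there both sides are `0`. -/
theorem tsum_eq_toReal_periodization (hf0 : ∀ x, 0 ≤ f x) (x : Fin d → ℝ) :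
    ∑' l : S, f (x - l) = (periodization (fun y => ENNReal.ofReal (f y)) S x).toReal := by
  rw [periodization, ENNReal.tsum_toReal_eq fun _ => ofReal_ne_top]
  simp only [ENNReal.toReal_ofReal (hf0 _)]

theorem IsPacking.ae_periodization_le_one (hpack : IsPacking f S) (hf0 : ∀ x, 0 ≤ f x)
    (hfi : Integrable f) (hδ : 0 < δ) (hS : Separated δ S) :
    ∀ᵐ x, periodization (fun y => ENNReal.ofReal (f y)) S x ≤ 1 := by
  filter_upwards [hpack, hS.ae_periodization_lt_top hδ hfi.aemeasurable.ennreal_ofReal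
    hfi.lintegral_lt_top.ne] with x hx hfin
  rw [tsum_eq_toReal_periodization hf0, ← toReal_one] at hx
  exact (toReal_le_toReal hfin.ne one_ne_top).1 hx

theorem setIntegral_tsum_eq_toReal_setLIntegral_periodization (hf0 : ∀ x, 0 ≤ f x)
    (hfi : Integrable f) (hδ : 0 < δ) (hS : Separated δ S) (K : Set (Fin d → ℝ)) :
    ∫ x in K, ∑' l : S, f (x - l) =
      (∫⁻ x in K, periodization (fun y => ENNReal.ofReal (f y)) S x).toReal := by
  simp_rw [tsum_eq_toReal_periodization hf0]
  exact integral_toReal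
    (hfi.aemeasurable.ennreal_ofReal.periodization (hS.countable hδ)).restrict
    (ae_restrict_of_ae (hS.ae_periodization_lt_top hδ hfi.aemeasurable.ennreal_ofReal
      hfi.lintegral_lt_top.ne))

end RealValued

end

theorem tiling_on_compact_of_weak_limit_general {d : ℕ} (f : (Fin d → ℝ) → ℝ)
    (hf0 : ∀ x, 0 ≤ f x) (hfi : Integrable f)
    (Λn : ℕ → Set (Fin d → ℝ)) (Λ : Set (Fin d → ℝ)) (δ : ℝ) (hδ : 0 < δ)
    (hsepn : ∀ n, Separated δ (Λn n)) (hsep : Separated δ Λ)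
    (hpack : ∀ n, IsPacking f (Λn n)) (hconv : WeakConv Λn Λ)
    (K : Set (Fin d → ℝ)) (hK : IsCompact K)
    (hlim : Tendsto (fun n : ℕ => ∫ x in K, ∑' l : Λn n, f (x - (l : Fin d → ℝ)))
      atTop (nhds (volume K).toReal)) :
    (∫ x in K, ∑' l : Λ, f (x - (l : Fin d → ℝ))) = (volume K).toReal ∧
      ∀ᵐ x ∂(volume.restrict K), (∑' l : Λ, f (x - (l : Fin d → ℝ))) = 1 := by
  set g : (Fin d → ℝ) → ℝ≥0∞ := fun x => ENNReal.ofReal (f x)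
  have hg : AEMeasurable g := hfi.aemeasurable.ennreal_ofReal
  have hpackn (n : ℕ) := (hpack n).ae_periodization_le_one hf0 hfi hδ (hsepn n)
  have hpackΛ := hconv.ae_periodization_le_one hδ hsepn hsep hg hpackn
  have hlim' : Tendsto (fun n => ∫⁻ x in K, periodization g (Λn n) x) atTop (𝓝 (volume K)) := by
    refine (ENNReal.tendsto_toReal_iff (fun n => ?_) hK.measure_ne_top).1 ?_
    · exact ((setLIntegral_le_measure_of_ae_le_one (hpackn n) K).trans_lt
        hK.measure_lt_top).ne
    · simpa only [setIntegral_tsum_eq_toReal_setLIntegral_periodization hf0 hfi hδ (hsepn _)]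
        using hlim
  have heq : ∫⁻ x in K, periodization g Λ x = volume K :=
    le_antisymm (setLIntegral_le_measure_of_ae_le_one hpackΛ K)
      (hconv.volume_le_setLIntegral_periodization hδ hsepn (hsep.countable hδ) hg
        hfi.lintegral_lt_top.ne hpackΛ hK hlim')
  have hone : ∀ᵐ x ∂volume.restrict K, periodization g Λ x = 1 :=
    ae_eq_of_ae_le_of_lintegral_le (ae_restrict_of_ae hpackΛ) (heq ▸ hK.measure_ne_top)
      aemeasurable_const (by rw [heq, setLIntegral_one])
  refine ⟨?_, hone.mono fun x hx => ?_⟩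
  · rw [setIntegral_tsum_eq_toReal_setLIntegral_periodization hf0 hfi hδ hsep, heq]
  · rw [tsum_eq_toReal_periodization hf0, hx, toReal_one]

theorem tiling_on_compact_of_weak_limit {d : ℕ} (f : (Fin d → ℝ) → ℝ)
    (hf0 : ∀ x, 0 ≤ f x) (hfi : Integrable f) (hint : ∫ x, f x = 1)
    (Λn : ℕ → Set (Fin d → ℝ)) (Λ : Set (Fin d → ℝ)) (δ : ℝ) (hδ : 0 < δ)
    (hsepn : ∀ n, Separated δ (Λn n)) (hsep : Separated δ Λ)
    (hpack : ∀ n, IsPacking f (Λn n)) (hconv : WeakConv Λn Λ)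
    (K : Set (Fin d → ℝ)) (hK : IsCompact K)
    (hlim : Tendsto (fun n : ℕ => ∫ x in K, ∑' l : Λn n, f (x - (l : Fin d → ℝ)))
      atTop (nhds (volume K).toReal)) :
    (∫ x in K, ∑' l : Λ, f (x - (l : Fin d → ℝ))) = (volume K).toReal ∧
      ∀ᵐ x ∂(volume.restrict K), (∑' l : Λ, f (x - (l : Fin d → ℝ))) = 1 :=
  tiling_on_compact_of_weak_limit_general f hf0 hfi Λn Λ δ hδ hsepn hsep hpack hconv K hK hlim
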